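/- arXiv:1707.05371 — 3 statements merged into one kernel-verified Lean document; each statement's English description precedes it below -/
import Mathlib

section
/- Any affine bijection of ℝ⁴ that is both a Galilean transformation and a Poincaré transformation corresponding to c maps simultaneity hyperplanes to simultaneity hyperplanes and is a Euclidean isometry on each spatial slice; in particular, a linear map that is simultaneously Galilean and Poincaré maps the time axis to the time axis. -/
noncomputable section

/-- Spatial distance of two coordinate points. -/
def spaceDist (x y : Fin 4 → ℝ) : ℝ :=
  Real.sqrt ((x 1 - y 1)^2 + (x 2 - y 2)^2 + (x 3 - y 3)^2)

/-- A Galilean transformation. -/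
def IsGalilean (G : (Fin 4 → ℝ) → (Fin 4 → ℝ)) : Prop :=
  (∃ A : (Fin 4 → ℝ) →ₗ[ℝ] (Fin 4 → ℝ), ∃ b : Fin 4 → ℝ, ∀ x, G x = A x + b) ∧
  Function.Bijective G ∧
  (∀ x y : Fin 4 → ℝ, |x 0 - y 0| = |(G x) 0 - (G y) 0|) ∧
  (∀ x y : Fin 4 → ℝ, x 0 = y 0 →
    (G x) 0 = (G y) 0 ∧ spaceDist (G x) (G y) = spaceDist x y)

/-- A Poincaré transformation corresponding to light speed `c`. -/
def IsPoincare (c : ℝ) (P : (Fin 4 → ℝ) → (Fin 4 → ℝ)) : Prop :=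
  (∃ A : (Fin 4 → ℝ) →ₗ[ℝ] (Fin 4 → ℝ), ∃ b : Fin 4 → ℝ, ∀ x, P x = A x + b) ∧
  Function.Bijective P ∧
  (∀ x y : Fin 4 → ℝ,
    c^2 * (x 0 - y 0)^2 - ((x 1 - y 1)^2 + (x 2 - y 2)^2 + (x 3 - y 3)^2)
      = c^2 * ((P x) 0 - (P y) 0)^2
        - (((P x) 1 - (P y) 1)^2 + ((P x) 2 - (P y) 2)^2 + ((P x) 3 - (P y) 3)^2))

/-- The time axis of `ℝ⁴`. -/
def timeAxis : Set (Fin 4 → ℝ) := {x | x 1 = 0 ∧ x 2 = 0 ∧ x 3 = 0}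

/-- A transformation that is both Galilean and Poincaré maps simultaneity
hyperplanes to simultaneity hyperplanes and is a Euclidean isometry on each
spatial slice; a linear such map maps the time axis to the time axis. -/
theorem galilean_and_poincare (c : ℝ) (hc : 0 < c)
    (F : (Fin 4 → ℝ) → (Fin 4 → ℝ)) (hG : IsGalilean F) (hP : IsPoincare c F) :
    (∀ x y : Fin 4 → ℝ, x 0 = y 0 → (F x) 0 = (F y) 0) ∧
    (∀ x y : Fin 4 → ℝ, x 0 = y 0 → spaceDist (F x) (F y) = spaceDist x y) ∧
    (IsLinearMap ℝ F → F '' timeAxis = timeAxis) := by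

  obtain ⟨_, hbij, htime, hsim⟩ := hG
  obtain ⟨_, _, hquad⟩ := hP
  refine ⟨fun x y h => (hsim x y h).1, fun x y h => (hsim x y h).2, ?_⟩
  intro hlin
  set e0 : Fin 4 → ℝ := fun i => if i = 0 then 1 else 0 with he0
  have hF0 : F 0 = 0 := by
    have := hlin.map_smul 0 0
    simpa using this
  have h1 : |(1:ℝ)| = |(F e0) 0| := by
    have := htime e0 0
    simpa [hF0, he0] using this
  have hsq : ((F e0) 0)^2 = 1 := by
    have h := congrArg (·^2) h1
    simp only [sq_abs] at h
    simpa using h.symm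
  have he00 : e0 0 = 1 := by simp [he0]
  have he01 : e0 1 = 0 := by simp [he0]
  have he02 : e0 2 = 0 := by simp [he0]
  have he03 : e0 3 = 0 := by simp [he0]
  have hq := hquad e0 0
  rw [hF0] at hq
  simp only [Pi.zero_apply, sub_zero, he00, he01, he02, he03] at hq
  rw [hsq] at hq
  have hzero : ((F e0) 1)^2 + ((F e0) 2)^2 + ((F e0) 3)^2 = 0 := by nlinarith [hq]
  have h1z : (F e0) 1 = 0 := by nlinarith [sq_nonneg ((F e0) 1), sq_nonneg ((F e0) 2), sq_nonneg ((F e0) 3)]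
  have h2z : (F e0) 2 = 0 := by nlinarith [sq_nonneg ((F e0) 1), sq_nonneg ((F e0) 2), sq_nonneg ((F e0) 3)]
  have h3z : (F e0) 3 = 0 := by nlinarith [sq_nonneg ((F e0) 1), sq_nonneg ((F e0) 2), sq_nonneg ((F e0) 3)]
  have hs : (F e0) 0 ≠ 0 := by
    intro h; rw [h] at hsq; norm_num at hsq
  ext y
  constructor
  · rintro ⟨x, ⟨hx1, hx2, hx3⟩, rfl⟩
    have hx : x = x 0 • e0 := by
      funext i
      fin_cases i <;> simp [he00, he01, he02, he03, hx1, hx2, hx3, he0]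
    rw [hx, hlin.map_smul]
    exact ⟨by simp [h1z], by simp [h2z], by simp [h3z]⟩
  · rintro ⟨hy1, hy2, hy3⟩
    refine ⟨(y 0 / (F e0) 0) • e0, ⟨by simp [he0], by simp [he0], by simp [he0]⟩, ?_⟩
    rw [hlin.map_smul]
    funext i
    fin_cases i
    · simp [div_mul_cancel₀ _ hs]
    · simp [h1z, hy1]
    · simp [h2z, hy2]
    · simp [h3z, hy3]
end
end

section
/- A Poincaré transformation (corresponding to light speed c) that maps every vertical line to a vertical line preserves time differences and spatial distances between simultaneous points, i.e., it is a trivial transformation (a Galilean transformation fixing the time direction up to sign). -/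
noncomputable section

/-- The vertical line over the spatial point `p`. -/
def vertLine (p : Fin 3 → ℝ) : Set (Fin 4 → ℝ) :=
  {x | x 1 = p 0 ∧ x 2 = p 1 ∧ x 3 = p 2}

/-- A Poincaré transformation mapping every vertical line to a vertical line
preserves time differences and spatial distances between simultaneous points,
i.e., it is a trivial transformation. -/
theorem poincare_vertical_is_trivial (c : ℝ) (hc : 0 < c)
    (P : (Fin 4 → ℝ) → (Fin 4 → ℝ)) (hP : IsPoincare c P)
    (hvert : ∀ p : Fin 3 → ℝ, ∃ q : Fin 3 → ℝ, P '' vertLine p = vertLine q) :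
    (∀ x y : Fin 4 → ℝ, |(P x) 0 - (P y) 0| = |x 0 - y 0|) ∧
    (∀ x y : Fin 4 → ℝ, x 0 = y 0 →
      (P x) 0 = (P y) 0 ∧ spaceDist (P x) (P y) = spaceDist x y) := by
  obtain ⟨⟨A, b, hAb⟩, hbij, hinv⟩ := hP
  have hc2 : c ^ 2 ≠ 0 := pow_ne_zero 2 hc.ne'
  have hdiff : ∀ x y : Fin 4 → ℝ, ∀ i, P x i - P y i = A (x - y) i := by
    intro x y i
    rw [hAb, hAb, map_sub]
    simp
  set e0 : Fin 4 → ℝ := fun i => if i = 0 then 1 else 0 with he0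
  have he00 : e0 0 = 1 := by simp [he0]
  have he01 : e0 1 = 0 := by simp [he0]
  have he02 : e0 2 = 0 := by simp [he0]
  have he03 : e0 3 = 0 := by simp [he0]
  -- The linear part maps the time direction to a vertical vector.
  have hd0 : ∀ i, A e0 i = P e0 i - P 0 i := by
    intro i; rw [hdiff e0 0 i, sub_zero]
  have hAe0 : A e0 1 = 0 ∧ A e0 2 = 0 ∧ A e0 3 = 0 := by
    obtain ⟨q, hq⟩ := hvert (fun _ => 0)
    have h1 : P e0 ∈ vertLine q := by
      rw [← hq]; exact ⟨e0, ⟨he01, he02, he03⟩, rfl⟩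
    have h2 : P 0 ∈ vertLine q := by
      rw [← hq]; exact ⟨0, ⟨rfl, rfl, rfl⟩, rfl⟩
    obtain ⟨h11, h12, h13⟩ := h1
    obtain ⟨h21, h22, h23⟩ := h2
    refine ⟨?_, ?_, ?_⟩ <;> rw [hd0]
    · rw [h11, h21, sub_self]
    · rw [h12, h22, sub_self]
    · rw [h13, h23, sub_self]
  set a : ℝ := A e0 0 with ha_def
  have ha : a ^ 2 = 1 := by
    have key := hinv e0 0
    simp only [Pi.zero_apply, sub_zero] at key
    rw [he00, he01, he02, he03] at key
    rw [show P e0 0 - P 0 0 = A e0 0 from (hd0 0).symm,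
        show P e0 1 - P 0 1 = A e0 1 from (hd0 1).symm,
        show P e0 2 - P 0 2 = A e0 2 from (hd0 2).symm,
        show P e0 3 - P 0 3 = A e0 3 from (hd0 3).symm,
        hAe0.1, hAe0.2.1, hAe0.2.2] at key
    have h : c ^ 2 * a ^ 2 = c ^ 2 * 1 := by
      rw [← ha_def] at key; nlinarith [key]
    exact mul_left_cancel₀ hc2 h
  have ha0 : a ≠ 0 := by
    intro h; rw [h] at ha; norm_num at ha
  -- Key lemma: for purely spatial u, A u has zero time component and equal spatial norm.
  have hzero : ∀ u : Fin 4 → ℝ, u 0 = 0 → A u 0 = 0 ∧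
      (A u 1)^2 + (A u 2)^2 + (A u 3)^2 = (u 1)^2 + (u 2)^2 + (u 3)^2 := by
    intro u hu
    have hk : ∀ t : ℝ,
        c^2 * t^2 - ((u 1)^2 + (u 2)^2 + (u 3)^2)
          = c^2 * (t * a + A u 0)^2 - ((A u 1)^2 + (A u 2)^2 + (A u 3)^2) := by
      intro t
      have hx : ∀ i, (t • e0 + u : Fin 4 → ℝ) i = t * e0 i + u i := by
        intro i; simp [Pi.add_apply, Pi.smul_apply, smul_eq_mul]
      have hAx : ∀ i, A (t • e0 + u) i = t * A e0 i + A u i := by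
        intro i
        rw [map_add, map_smul]
        simp [Pi.add_apply, Pi.smul_apply, smul_eq_mul]
      have hPx : ∀ i, P (t • e0 + u) i - P 0 i = t * A e0 i + A u i := by
        intro i; rw [hdiff _ 0 i, sub_zero, hAx i]
      have key := hinv (t • e0 + u) 0
      simp only [Pi.zero_apply, sub_zero] at key
      rw [hx 0, hx 1, hx 2, hx 3, he00, he01, he02, he03,
          hPx 0, hPx 1, hPx 2, hPx 3, hAe0.1, hAe0.2.1, hAe0.2.2, hu] at key
      rw [← ha_def] at key
      linear_combination key
    have h4 : c ^ 2 * (4 * a * A u 0) = 0 := by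
      linear_combination hk (-1) - hk 1
    have h4' : 4 * a * A u 0 = 0 := (mul_eq_zero.mp h4).resolve_left hc2
    have hs : A u 0 = 0 := by
      rcases mul_eq_zero.mp h4' with h | h
      · rcases mul_eq_zero.mp h with h' | h'
        · norm_num at h'
        · exact absurd h' ha0
      · exact h
    refine ⟨hs, ?_⟩
    have h0 := hk 0
    rw [hs] at h0
    linear_combination h0
  have hA0 : ∀ u : Fin 4 → ℝ, A u 0 = a * u 0 := by
    intro u
    have hv : (u - u 0 • e0) 0 = 0 := by
      simp [Pi.sub_apply, Pi.smul_apply, he00]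
    have h := (hzero _ hv).1
    have h' : A u 0 - u 0 * A e0 0 = 0 := by
      rw [map_sub, map_smul] at h
      simpa [Pi.sub_apply, Pi.smul_apply, smul_eq_mul] using h
    rw [← ha_def] at h'
    linear_combination h'
  have habs : |a| = 1 := by
    rcases mul_self_eq_one_iff.mp (by nlinarith : a * a = 1) with h | h <;>
      simp [h]
  constructor
  · intro x y
    rw [show P x 0 - P y 0 = A (x - y) 0 from hdiff x y 0, hA0,
        Pi.sub_apply, abs_mul, habs, one_mul]
  · intro x y hxy
    have hu0 : (x - y) 0 = 0 := by simp [Pi.sub_apply, hxy]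
    have h1 : P x 0 = P y 0 := by
      have := hdiff x y 0
      rw [hA0, hu0, mul_zero] at this
      linarith
    refine ⟨h1, ?_⟩
    unfold spaceDist
    congr 1
    have h2 := (hzero (x - y) hu0).2
    rw [show P x 1 - P y 1 = A (x - y) 1 from hdiff x y 1,
        show P x 2 - P y 2 = A (x - y) 2 from hdiff x y 2,
        show P x 3 - P y 3 = A (x - y) 3 from hdiff x y 3, h2]
    simp [Pi.sub_apply]
end
end

section
/- The spatial part of R_v (the lower-right 3×3 block of the rotation matrix R_v used in radarization) is an orthogonal matrix, i.e., its columns are orthonormal, for any v ∈ ℝ³ with v_y ≠ 0 or v_z ≠ 0. -/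
/-!
With `r = |v|` and `u = (r + v_x, v_y, v_z) = r e₁ + v`, the spatial block of `R_v` equals
`diag(-1, 1, 1) · (2 u uᵀ / |u|² - 1)`: up to a sign flip of the first coordinate it is the
half-turn about the bisector of `e₁` and `v / r`, which swaps these two unit vectors. Entrywise this
rests on `|u|² = 2 r (r + v_x)` and `(r - v_x) / (v_y² + v_z²) = 1 / (r + v_x)`. The half-turn is
symmetric and squares to `1` since `(u uᵀ)² = |u|² u uᵀ`, so both factors are orthogonal.
-/

noncomputable section

/-- The rotation matrix `R_v` of the radarization construction (in the case
`v_y ≠ 0` or `v_z ≠ 0`). -/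
def rotMatrix (vx vy vz : ℝ) : Matrix (Fin 4) (Fin 4) ℝ :=
  (Real.sqrt (vx^2 + vy^2 + vz^2))⁻¹ •
    ![![Real.sqrt (vx^2 + vy^2 + vz^2), 0, 0, 0],
      ![0, -vx, -vy, -vz],
      ![0, vy, -vx - vz^2 * (Real.sqrt (vx^2 + vy^2 + vz^2) - vx) / (vy^2 + vz^2),
        vy * vz * (Real.sqrt (vx^2 + vy^2 + vz^2) - vx) / (vy^2 + vz^2)],
      ![0, vz, vy * vz * (Real.sqrt (vx^2 + vy^2 + vz^2) - vx) / (vy^2 + vz^2),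
        -vx - vy^2 * (Real.sqrt (vx^2 + vy^2 + vz^2) - vx) / (vy^2 + vz^2)]]

/-- The spatial (lower-right `3 × 3`) block of `R_v`. -/
def rotSpatial (vx vy vz : ℝ) : Matrix (Fin 3) (Fin 3) ℝ :=
  Matrix.of fun i j : Fin 3 => rotMatrix vx vy vz i.succ j.succ
open Matrix

section HalfTurn

variable {n K : Type*} [Fintype n] [DecidableEq n] [Field K]

def halfTurn (u : n → K) : Matrix n n K :=
  (2 / (u ⬝ᵥ u)) • vecMulVec u u - 1

theorem transpose_halfTurn (u : n → K) : (halfTurn u)ᵀ = halfTurn u := by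
  simp [halfTurn]

theorem halfTurn_mul_self {u : n → K} (hu : u ⬝ᵥ u ≠ 0) : halfTurn u * halfTurn u = 1 := by
  set c := 2 / (u ⬝ᵥ u)
  have hP : vecMulVec u u * vecMulVec u u = (u ⬝ᵥ u) • vecMulVec u u := by
    rw [vecMulVec_mul_vecMulVec, vecMulVec_smul]
  have hc : c * c * (u ⬝ᵥ u) - 2 * c = 0 := by
    simp only [c]; field_simp; ring
  calc halfTurn u * halfTurn u
      = (c * c * (u ⬝ᵥ u) - 2 * c) • vecMulVec u u + 1 := by
        simp only [halfTurn, sub_mul, mul_sub, smul_mul_smul_comm, hP, smul_smul, mul_one, one_mul]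
        module
    _ = 1 := by rw [hc, zero_smul, zero_add]

theorem halfTurn_mem_orthogonalGroup {u : n → K} (hu : u ⬝ᵥ u ≠ 0) :
    halfTurn u ∈ orthogonalGroup n K :=
  (mem_orthogonalGroup_iff' _ _).2 <| by rw [transpose_halfTurn, halfTurn_mul_self hu]

end HalfTurn

theorem diagonal_mem_orthogonalGroup {n R : Type*} [Fintype n] [DecidableEq n] [CommRing R]
    {d : n → R} (hd : ∀ i, d i * d i = 1) : diagonal d ∈ orthogonalGroup n R :=
  (mem_orthogonalGroup_iff' _ _).2 <| by
    rw [diagonal_transpose, diagonal_mul_diagonal, ← diagonal_one]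
    exact congrArg diagonal (funext hd)

theorem rotSpatial_eq_diagonal_mul_halfTurn {vx vy vz : ℝ} (h : vy ≠ 0 ∨ vz ≠ 0) :
    rotSpatial vx vy vz =
      diagonal ![-1, 1, 1] * halfTurn ![√(vx ^ 2 + vy ^ 2 + vz ^ 2) + vx, vy, vz] := by
  set r := √(vx ^ 2 + vy ^ 2 + vz ^ 2) with hr
  have hs : 0 < vy ^ 2 + vz ^ 2 := by rcases h with h | h <;> positivity
  have hr2 : r ^ 2 = vx ^ 2 + vy ^ 2 + vz ^ 2 := Real.sq_sqrt (by positivity)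
  have hvx : |vx| < r := by
    rw [hr, ← Real.sqrt_sq_eq_abs]; exact Real.sqrt_lt_sqrt (sq_nonneg _) (by linarith)
  have hrvx : 0 < r + vx := by linarith [neg_abs_le vx]
  have hr0 : 0 < r := (abs_nonneg vx).trans_lt hvx
  ext i j
  -- each entry is a polynomial identity modulo `hr2`
  fin_cases i <;> fin_cases j <;>
    simp only [rotSpatial, rotMatrix, halfTurn, dotProduct, Fin.sum_univ_three, ← hr, of_apply,
      Pi.smul_apply, smul_eq_mul, cons_val_succ, cons_val, Fin.reduceFinMk, vecMulVec_cons, smul_of,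
      diagonal_mul, Matrix.sub_apply, one_apply_eq, one_apply_ne, ne_eq, Fin.reduceEq,
      not_false_eq_true] <;>
    field_simp <;>
    grind

/-- The spatial part of `R_v` is an orthogonal matrix: its columns are
orthonormal. -/
theorem rotSpatial_orthogonal (vx vy vz : ℝ) (h : vy ≠ 0 ∨ vz ≠ 0) :
    (rotSpatial vx vy vz).transpose * rotSpatial vx vy vz = 1 := by
  have hD : diagonal ![(-1 : ℝ), 1, 1] ∈ orthogonalGroup (Fin 3) ℝ :=
    diagonal_mem_orthogonalGroup fun i => by fin_cases i <;> norm_num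
  have hu : ![√(vx ^ 2 + vy ^ 2 + vz ^ 2) + vx, vy, vz] ≠ 0 := fun hu =>
    h.elim (· (congrFun hu 1)) (· (congrFun hu 2))
  rw [← mem_orthogonalGroup_iff', rotSpatial_eq_diagonal_mul_halfTurn h]
  exact mul_mem hD (halfTurn_mem_orthogonalGroup (dotProduct_self_eq_zero.not.2 hu))
end
end
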